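/- Fix R > 0 and define P_R : ℝ^d → ℝ^d by P_R(x) = x / (1 + (max(‖x‖ − R, 0))² / (8 (max(R,1))²)). Then for every x ∈ ℝ^d one has ‖P_R(x)‖ ≤ min(2 max(R,1), ‖x‖); moreover P_R is Fréchet differentiable at every x and the operator norm of its derivative satisfies ‖DP_R(x)‖_op ≤ 2. -/

import Mathlib

/-!
The map is `x ↦ g(‖x‖)⁻¹ • x` with the radial weight `g(r) = 1 + (r - R)₊² / (8M²) ≥ 1`,
`M = max R 1 ≥ R`. Since `(r - R)₊ ≥ r - M`, the bound `r ≤ 2M g(r)` reduces to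
`4Mr ≤ 8M² + (r - M)²`, i.e. `(r - 3M)² ≥ 0`. The derivative is
`g⁻¹ • id - g⁻² g'(‖x‖) ⟨x/‖x‖, ·⟩ x`, of norm at most `g⁻¹ + r g'(r) / g² ≤ 2`
because `r g'(r) ≤ g(r)²`; the squared positive part keeps `g` differentiable at `r = R`.
-/

/-- The projection map `P_R(x) = x / (1 + (‖x‖ − R)₊² / (8 (R ∨ 1)²))`. -/
noncomputable def projR {d : ℕ} (R : ℝ) (x : EuclideanSpace ℝ (Fin d)) :
    EuclideanSpace ℝ (Fin d) :=
  (1 + (max (‖x‖ - R) 0) ^ 2 / (8 * (max R 1) ^ 2))⁻¹ • x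

lemma hasDerivAt_posPart_sq (s : ℝ) :
    HasDerivAt (fun t : ℝ => max t 0 ^ 2) (2 * max s 0) s := by
  refine hasDerivAt_of_hasDerivAt_of_ne' (f := fun t : ℝ => max t 0 ^ 2)
    (g := fun t => 2 * max t 0) (x := 0) (fun y hy => ?_) (by fun_prop) (by fun_prop) s
  rcases hy.lt_or_gt with hy | hy
  · have heq : (fun t : ℝ => max t 0 ^ 2) =ᶠ[nhds y] fun _ => 0 := by
      filter_upwards [Iio_mem_nhds hy] with t (ht : t < 0)
      simp [max_eq_right ht.le]
    simpa [max_eq_right hy.le] using (hasDerivAt_const y (0 : ℝ)).congr_of_eventuallyEq heq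
  · have heq : (fun t : ℝ => max t 0 ^ 2) =ᶠ[nhds y] fun t => t ^ 2 := by
      filter_upwards [Ioi_mem_nhds hy] with t (ht : 0 < t)
      simp [max_eq_left ht.le]
    simpa [max_eq_left hy.le] using (hasDerivAt_pow 2 y).congr_of_eventuallyEq heq

section RadialWeight

noncomputable def radialWeight (R M r : ℝ) : ℝ :=
  1 + max (r - R) 0 ^ 2 / (8 * M ^ 2)

variable {R M : ℝ}

lemma one_le_radialWeight (r : ℝ) : 1 ≤ radialWeight R M r := by
  unfold radialWeight
  have : 0 ≤ max (r - R) 0 ^ 2 / (8 * M ^ 2) := by positivity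
  linarith

lemma hasDerivAt_radialWeight (r : ℝ) :
    HasDerivAt (radialWeight R M) (max (r - R) 0 / (4 * M ^ 2)) r := by
  have h := (((hasDerivAt_posPart_sq (r - R)).comp r ((hasDerivAt_id r).sub_const R)).div_const
    (8 * M ^ 2)).const_add 1
  exact h.congr_deriv (by ring)

lemma le_two_mul_radialWeight (hRM : R ≤ M) (hM : 0 < M) (r : ℝ) :
    r ≤ 2 * M * radialWeight R M r := by
  have hu : r - M ≤ max (r - R) 0 := le_max_of_le_left (by linarith)
  have hu0 : 0 ≤ max (r - R) 0 := le_max_right _ _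
  have key : 4 * M * r ≤ 8 * M ^ 2 + max (r - R) 0 ^ 2 := by
    rcases le_or_gt r (2 * M) with h | h
    · nlinarith
    · nlinarith [sq_nonneg (r - 3 * M), mul_le_mul hu hu (by linarith) hu0]
  have hw : 2 * M * radialWeight R M r = (8 * M ^ 2 + max (r - R) 0 ^ 2) / (4 * M) := by
    unfold radialWeight
    field_simp
    ring
  rw [hw, le_div_iff₀ (by positivity)]
  linarith

lemma mul_deriv_radialWeight_le_sq (hRM : R ≤ M) (hM : 0 < M) (r : ℝ) :
    r * (max (r - R) 0 / (4 * M ^ 2)) ≤ radialWeight R M r ^ 2 := by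
  set u := max (r - R) 0
  have hu0 : 0 ≤ u := le_max_right _ _
  have hru : r ≤ u + M := by linarith [le_max_left (r - R) 0]
  have hpoly : 16 * M ^ 2 * (r * u) ≤ (8 * M ^ 2 + u ^ 2) ^ 2 := by
    nlinarith [sq_nonneg (M ^ 2 - M * u), sq_nonneg (u ^ 2 - 8 * M ^ 2),
      mul_nonneg (mul_nonneg hu0 (sq_nonneg M)) (by linarith : 0 ≤ u + M - r), sq_nonneg u]
  have hw : radialWeight R M r ^ 2 = (8 * M ^ 2 + u ^ 2) ^ 2 / (64 * M ^ 4) := by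
    unfold radialWeight
    field_simp
    ring
  rw [hw, ← mul_div_assoc, div_le_div_iff₀ (by positivity) (by positivity)]
  nlinarith

variable {E : Type*} [NormedAddCommGroup E] [InnerProductSpace ℝ E]

lemma norm_radialWeight_inv_smul_le (hRM : R ≤ M) (hM : 0 < M) (x : E) :
    ‖(radialWeight R M ‖x‖)⁻¹ • x‖ ≤ min (2 * M) ‖x‖ := by
  have hw := one_le_radialWeight (R := R) (M := M) ‖x‖
  rw [norm_smul, Real.norm_eq_abs, abs_of_pos (by positivity)]
  refine le_min ?_ ?_ <;> rw [inv_mul_le_iff₀ (by positivity)]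
  · linarith [le_two_mul_radialWeight hRM hM ‖x‖]
  · exact le_mul_of_one_le_left (norm_nonneg x) hw

lemma exists_hasFDerivAt_radialWeight_norm (hR : 0 < R) (x : E) :
    ∃ L : E →L[ℝ] ℝ, HasFDerivAt (fun y => radialWeight R M ‖y‖) L x ∧
      ‖L‖ ≤ max (‖x‖ - R) 0 / (4 * M ^ 2) := by
  rcases eq_or_ne x 0 with rfl | hx
  · refine ⟨0, hasFDerivAt_zero_of_eventually_const 1 ?_, norm_zero.trans_le (by positivity)⟩
    filter_upwards [Metric.ball_mem_nhds (0 : E) hR] with y hy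
    rw [mem_ball_zero_iff] at hy
    simp [radialWeight, max_eq_right (sub_nonpos.2 hy.le)]
  · have hnorm := ((contDiffAt_norm (n := 1) ℝ hx).differentiableAt one_ne_zero).hasFDerivAt
    refine ⟨_, (hasDerivAt_radialWeight ‖x‖).comp_hasFDerivAt x hnorm, ?_⟩
    rw [norm_smul, Real.norm_eq_abs, abs_of_nonneg (by positivity)]
    exact mul_le_of_le_one_right (by positivity)
      (by simpa using norm_fderiv_le_of_lipschitz (x₀ := x) ℝ lipschitzWith_one_norm)

end RadialWeight

section InvSmul

variable {E : Type*} [NormedAddCommGroup E] [NormedSpace ℝ E]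

lemma hasFDerivAt_inv_smul_self {φ : E → ℝ} {L : E →L[ℝ] ℝ} {x : E}
    (hφ : HasFDerivAt φ L x) (hx : φ x ≠ 0) :
    HasFDerivAt (fun y => (φ y)⁻¹ • y)
      ((φ x)⁻¹ • ContinuousLinearMap.id ℝ E + (-(φ x ^ 2)⁻¹ • L).smulRight x) x :=
  ((hasDerivAt_inv hx).comp_hasFDerivAt x hφ).smul (hasFDerivAt_id x)

lemma norm_inv_smul_id_add_smulRight_le {a : ℝ} {L : E →L[ℝ] ℝ} {x : E}
    (ha : 1 ≤ a) (hL : ‖L‖ * ‖x‖ ≤ a ^ 2) :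
    ‖a⁻¹ • ContinuousLinearMap.id ℝ E + (-(a ^ 2)⁻¹ • L).smulRight x‖ ≤ 2 := by
  have ha0 : 0 < a := by linarith
  calc _ ≤ ‖a⁻¹ • ContinuousLinearMap.id ℝ E‖ + ‖(-(a ^ 2)⁻¹ • L).smulRight x‖ := norm_add_le _ _
    _ ≤ a⁻¹ * 1 + (a ^ 2)⁻¹ * (‖L‖ * ‖x‖) := by
      rw [norm_smul, ContinuousLinearMap.norm_smulRight_apply, norm_smul, norm_neg,
        Real.norm_eq_abs, Real.norm_eq_abs, abs_of_pos (by positivity), abs_of_pos (by positivity),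
        mul_assoc]
      gcongr
      exact ContinuousLinearMap.norm_id_le
    _ ≤ 1 * 1 + (a ^ 2)⁻¹ * a ^ 2 := by
      gcongr
      exact inv_le_one_of_one_le₀ ha
    _ = 2 := by field_simp; norm_num

end InvSmul

theorem stmt_0 {d : ℕ} (R : ℝ) (hR : 0 < R) (x : EuclideanSpace ℝ (Fin d)) :
    ‖projR R x‖ ≤ min (2 * max R 1) ‖x‖ ∧
      DifferentiableAt ℝ (projR (d := d) R) x ∧
      ‖fderiv ℝ (projR (d := d) R) x‖ ≤ 2 := by
  have hRM : R ≤ max R 1 := le_max_left _ _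
  have hM : 0 < max R 1 := lt_max_of_lt_right one_pos
  have hP : projR (d := d) R = fun y => (radialWeight R (max R 1) ‖y‖)⁻¹ • y := rfl
  obtain ⟨L, hg, hL⟩ := exists_hasFDerivAt_radialWeight_norm (M := max R 1) hR x
  have hw := one_le_radialWeight (R := R) (M := max R 1) ‖x‖
  have hD := hasFDerivAt_inv_smul_self hg (by positivity)
  rw [hP]
  refine ⟨norm_radialWeight_inv_smul_le hRM hM x, hD.differentiableAt, hD.fderiv ▸ ?_⟩
  refine norm_inv_smul_id_add_smulRight_le hw ?_
  calc ‖L‖ * ‖x‖ ≤ ‖x‖ * (max (‖x‖ - R) 0 / (4 * max R 1 ^ 2)) := by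
        rw [mul_comm]; exact mul_le_mul_of_nonneg_left hL (norm_nonneg x)
    _ ≤ _ := mul_deriv_radialWeight_le_sq hRM hM ‖x‖
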